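/- arXiv:1506.02031 — 5 statements merged into one kernel-verified Lean document; each statement's English description precedes it below -/
import Mathlib

section
/- Let X^n, Y^n be sequences of discrete random variables where X_1,...,X_n are i.i.d. Then (1/n) I(X^n;Y^n) ≥ (1/n) Σ_{t=1}^n I(X_t;Y_t). -/
/-!
Under independence the entropy of `X^n` is additive, `H(X^n) = ∑ H(X_t)`, while conditional entropy
is always subadditive, `H(X^n | Y^n) ≤ ∑ H(X_t | Y_t)`; subtracting gives the claim, since
`I(X;Y) = H(X) - H(X | Y)`. Subadditivity is Gibbs' inequality `H(X^n, Y^n) ≤ -𝔼 log₂ Q(X^n, Y^n)`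
for the subprobability `Q(x, y) = P(y) ∏ P(x_t | y_t)`.
-/

open Finset Real

noncomputable section

/-- `w` is a probability mass function on the finite sample space `Ω`. -/
def IsPMF {Ω : Type*} [Fintype Ω] (w : Ω → ℝ) : Prop :=
  (∀ ω, 0 ≤ w ω) ∧ ∑ ω, w ω = 1

/-- Distribution (pmf) of the random variable `X` under the weight `w`. -/
def rvDist {Ω A : Type*} [Fintype Ω] [DecidableEq A] (w : Ω → ℝ) (X : Ω → A) (a : A) : ℝ :=
  ∑ ω, if X ω = a then w ω else 0

/-- Shannon entropy (in bits) of `X` under `w`. -/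
def Hent {Ω A : Type*} [Fintype Ω] [Fintype A] [DecidableEq A] (w : Ω → ℝ) (X : Ω → A) : ℝ :=
  -∑ a, rvDist w X a * Real.logb 2 (rvDist w X a)

/-- Conditional entropy `H(X | Z)` (in bits). -/
def Hcond {Ω A C : Type*} [Fintype Ω] [Fintype A] [Fintype C] [DecidableEq A] [DecidableEq C]
    (w : Ω → ℝ) (X : Ω → A) (Z : Ω → C) : ℝ :=
  Hent w (fun ω => (X ω, Z ω)) - Hent w Z

/-- Mutual information `I(X;Y)` (in bits). -/
def MI {Ω A B : Type*} [Fintype Ω] [Fintype A] [Fintype B] [DecidableEq A] [DecidableEq B]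
    (w : Ω → ℝ) (X : Ω → A) (Y : Ω → B) : ℝ :=
  Hent w X + Hent w Y - Hent w (fun ω => (X ω, Y ω))

/-- Conditional mutual information `I(X;Y|E)` (in bits). -/
def CMI {Ω A B C : Type*} [Fintype Ω] [Fintype A] [Fintype B] [Fintype C]
    [DecidableEq A] [DecidableEq B] [DecidableEq C]
    (w : Ω → ℝ) (X : Ω → A) (Y : Ω → B) (E : Ω → C) : ℝ :=
  Hent w (fun ω => (X ω, E ω)) + Hent w (fun ω => (Y ω, E ω))
    - Hent w (fun ω => (X ω, Y ω, E ω)) - Hent w E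

/-- `X` and `E` are independent under `w`. -/
def IndepRV {Ω A C : Type*} [Fintype Ω] [DecidableEq A] [DecidableEq C]
    (w : Ω → ℝ) (X : Ω → A) (E : Ω → C) : Prop :=
  ∀ a c, rvDist w (fun ω => (X ω, E ω)) (a, c) = rvDist w X a * rvDist w E c

/-- The family `X` is i.i.d. under `w`: the joint pmf factorizes into the (common) marginals. -/
def IIDFamily {Ω A : Type*} [Fintype Ω] [DecidableEq A] {n : ℕ}
    (w : Ω → ℝ) (X : Fin n → Ω → A) : Prop :=
  (∀ v : Fin n → A, rvDist w (fun ω t => X t ω) v = ∏ t, rvDist w (X t) (v t)) ∧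
  (∀ s t, rvDist w (X s) = rvDist w (X t))

section Entropy

variable {Ω C : Type*} [Fintype Ω] [DecidableEq C] {w : Ω → ℝ}

lemma rvDist_nonneg (hw : ∀ ω, 0 ≤ w ω) (S : Ω → C) (c : C) : 0 ≤ rvDist w S c :=
  sum_nonneg fun ω _ => by split <;> simp [hw ω]

lemma sum_rvDist [Fintype C] (hw : IsPMF w) (S : Ω → C) : ∑ c, rvDist w S c = 1 := by
  unfold rvDist
  rw [sum_comm]
  simp [hw.2]

lemma le_rvDist_apply (hw : ∀ ω, 0 ≤ w ω) (S : Ω → C) (ω : Ω) : w ω ≤ rvDist w S (S ω) := by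
  have := single_le_sum (f := fun ω' => if S ω' = S ω then w ω' else 0)
    (fun ω' _ => by split <;> simp [hw ω']) (mem_univ ω)
  simpa [rvDist] using this

lemma rvDist_apply_pos (hw : ∀ ω, 0 ≤ w ω) (S : Ω → C) {ω : Ω} (hω : 0 < w ω) :
    0 < rvDist w S (S ω) :=
  hω.trans_le (le_rvDist_apply hw S ω)

lemma sum_rvDist_mul [Fintype C] (S : Ω → C) (F : C → ℝ) :
    ∑ c, rvDist w S c * F c = ∑ ω, w ω * F (S ω) := by
  simp only [rvDist, sum_mul, ite_mul, zero_mul]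
  rw [sum_comm]
  simp

lemma sum_rvDist_prod_fst {A : Type*} [Fintype A] [DecidableEq A] (X : Ω → A) (S : Ω → C)
    (c : C) : ∑ a, rvDist w (fun ω => (X ω, S ω)) (a, c) = rvDist w S c := by
  unfold rvDist
  rw [sum_comm]
  refine sum_congr rfl fun ω _ => ?_
  by_cases h : S ω = c <;> simp [h, Prod.ext_iff]

lemma Hent_eq_neg_sum [Fintype C] (S : Ω → C) :
    Hent w S = -∑ ω, w ω * logb 2 (rvDist w S (S ω)) := by
  rw [Hent, sum_rvDist_mul S fun c => logb 2 (rvDist w S c)]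

lemma sum_mul_congr_of_pos (hw : ∀ ω, 0 ≤ w ω) {f g : Ω → ℝ}
    (h : ∀ ω, 0 < w ω → f ω = g ω) : ∑ ω, w ω * f ω = ∑ ω, w ω * g ω := by
  refine sum_congr rfl fun ω _ => ?_
  rcases (hw ω).eq_or_lt with h0 | hpos
  · simp [← h0]
  · rw [h ω hpos]

lemma mul_logb_sub_logb_le {p q : ℝ} (hp : 0 < p) (hq : 0 < q) :
    p * (logb 2 q - logb 2 p) ≤ (q - p) / log 2 := by
  rw [← logb_div hq.ne' hp.ne', logb, ← mul_div_assoc]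
  gcongr
  calc p * log (q / p) ≤ p * (q / p - 1) := by
        gcongr
        exact log_le_sub_one_of_pos (div_pos hq hp)
    _ = q - p := by field_simp

lemma Hent_le_neg_sum_mul_logb [Fintype C] (hw : IsPMF w) (S : Ω → C) {q : C → ℝ}
    (hq : ∀ c, 0 ≤ q c) (hq_sum : ∑ c, q c ≤ 1) (hq_pos : ∀ ω, 0 < w ω → 0 < q (S ω)) :
    Hent w S ≤ -∑ ω, w ω * logb 2 (q (S ω)) := by
  let p := rvDist w S
  have pointwise : ∀ ω, w ω * (logb 2 (q (S ω)) - logb 2 (p (S ω)))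
      ≤ w ω * ((q (S ω) - p (S ω)) / p (S ω)) / log 2 := by
    intro ω
    rcases (hw.1 ω).eq_or_lt with h0 | hpos
    · simp [← h0]
    have hp : 0 < p (S ω) := rvDist_apply_pos hw.1 S hpos
    calc w ω * (logb 2 (q (S ω)) - logb 2 (p (S ω)))
        = w ω / p (S ω) * (p (S ω) * (logb 2 (q (S ω)) - logb 2 (p (S ω)))) := by
          field_simp
      _ ≤ w ω / p (S ω) * ((q (S ω) - p (S ω)) / log 2) := by
          gcongr
          exact mul_logb_sub_logb_le hp (hq_pos ω hpos)
      _ = _ := by ring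
  have expectation : ∑ ω, w ω * ((q (S ω) - p (S ω)) / p (S ω)) ≤ 0 :=
    calc ∑ ω, w ω * ((q (S ω) - p (S ω)) / p (S ω))
        = ∑ c, p c * ((q c - p c) / p c) := (sum_rvDist_mul S fun c => (q c - p c) / p c).symm
      _ ≤ ∑ c, (q c - p c) := by
          gcongr with c
          rcases (rvDist_nonneg hw.1 S c).eq_or_lt with h0 | hpos
          · simp [p, ← h0, hq c]
          · rw [mul_div_cancel₀ _ hpos.ne']
      _ = ∑ c, q c - 1 := by rw [sum_sub_distrib, sum_rvDist hw S]
      _ ≤ 0 := by linarith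
  have gap : ∑ ω, w ω * (logb 2 (q (S ω)) - logb 2 (p (S ω))) ≤ 0 :=
    calc _ ≤ ∑ ω, w ω * ((q (S ω) - p (S ω)) / p (S ω)) / log 2 :=
          sum_le_sum fun ω _ => pointwise ω
      _ = (∑ ω, w ω * ((q (S ω) - p (S ω)) / p (S ω))) / log 2 := (sum_div _ _ _).symm
      _ ≤ 0 := div_nonpos_of_nonpos_of_nonneg expectation (log_pos one_lt_two).le
  rw [Hent_eq_neg_sum]
  simp only [mul_sub, sum_sub_distrib] at gap
  linarith

end Entropy

section Family

variable {Ω ι A B : Type*} [Fintype Ω] [DecidableEq A] [DecidableEq B] {w : Ω → ℝ}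

/-- `P(X = a | Y = b)`, with the junk value `0` when `P(Y = b) = 0`. -/
def condDist (w : Ω → ℝ) (X : Ω → A) (Y : Ω → B) (a : A) (b : B) : ℝ :=
  rvDist w (fun ω => (X ω, Y ω)) (a, b) / rvDist w Y b

lemma condDist_nonneg (hw : ∀ ω, 0 ≤ w ω) (X : Ω → A) (Y : Ω → B) (a : A) (b : B) :
    0 ≤ condDist w X Y a b :=
  div_nonneg (rvDist_nonneg hw _ _) (rvDist_nonneg hw _ _)

lemma condDist_apply_pos (hw : ∀ ω, 0 ≤ w ω) (X : Ω → A) (Y : Ω → B) {ω : Ω} (hω : 0 < w ω) :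
    0 < condDist w X Y (X ω) (Y ω) :=
  div_pos (rvDist_apply_pos hw (fun ω => (X ω, Y ω)) hω) (rvDist_apply_pos hw Y hω)

variable [Fintype A]

lemma sum_condDist_le_one (X : Ω → A) (Y : Ω → B) (b : B) : ∑ a, condDist w X Y a b ≤ 1 := by
  simp only [condDist, ← sum_div, sum_rvDist_prod_fst]
  exact div_self_le_one _

variable [Fintype B]

lemma MI_eq_Hent_sub_Hcond (X : Ω → A) (Y : Ω → B) : MI w X Y = Hent w X - Hcond w X Y := by
  rw [MI, Hcond]
  ring

variable [Fintype ι] [DecidableEq ι]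

lemma Hent_pi_eq_sum (hw : ∀ ω, 0 ≤ w ω) (X : ι → Ω → A)
    (hX : ∀ v, rvDist w (fun ω t => X t ω) v = ∏ t, rvDist w (X t) (v t)) :
    Hent w (fun ω t => X t ω) = ∑ t, Hent w (X t) := by
  rw [Hent_eq_neg_sum, sum_mul_congr_of_pos hw
    (g := fun ω => ∑ t, logb 2 (rvDist w (X t) (X t ω))) fun ω hω => ?_]
  · simp only [Hent_eq_neg_sum, mul_sum, sum_neg_distrib]
    rw [sum_comm]
  · rw [hX, logb_prod _ _ fun t _ => (rvDist_apply_pos hw (X t) hω).ne']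

lemma sum_rvDist_mul_prod_condDist_le_one (hw : IsPMF w) (X : ι → Ω → A) (Y : ι → Ω → B) :
    ∑ s : (ι → A) × (ι → B),
      rvDist w (fun ω t => Y t ω) s.2 * ∏ t, condDist w (X t) (Y t) (s.1 t) (s.2 t) ≤ 1 := by
  rw [Fintype.sum_prod_type_right]
  dsimp only
  calc ∑ y : ι → B, ∑ x : ι → A,
        rvDist w (fun ω t => Y t ω) y * ∏ t, condDist w (X t) (Y t) (x t) (y t)
      = ∑ y, rvDist w (fun ω t => Y t ω) y * ∏ t, ∑ a, condDist w (X t) (Y t) a (y t) := by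
        simp_rw [← mul_sum, Fintype.prod_sum]
    _ ≤ ∑ y, rvDist w (fun ω t => Y t ω) y * 1 := by
        refine sum_le_sum fun y _ => mul_le_mul_of_nonneg_left ?_ (rvDist_nonneg hw.1 _ _)
        exact prod_le_one (fun t _ => sum_nonneg fun a _ => condDist_nonneg hw.1 _ _ _ _)
          fun t _ => sum_condDist_le_one _ _ _
    _ = 1 := by simp [sum_rvDist hw]

lemma Hcond_pi_le_sum (hw : IsPMF w) (X : ι → Ω → A) (Y : ι → Ω → B) :
    Hcond w (fun ω t => X t ω) (fun ω t => Y t ω) ≤ ∑ t, Hcond w (X t) (Y t) := by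
  let Q : (ι → A) × (ι → B) → ℝ := fun s =>
    rvDist w (fun ω t => Y t ω) s.2 * ∏ t, condDist w (X t) (Y t) (s.1 t) (s.2 t)
  have hQ_nonneg : ∀ s, 0 ≤ Q s := fun s =>
    mul_nonneg (rvDist_nonneg hw.1 _ _) (prod_nonneg fun t _ => condDist_nonneg hw.1 _ _ _ _)
  have hQ_pos : ∀ ω, 0 < w ω → 0 < Q ((fun t => X t ω), (fun t => Y t ω)) := fun ω hω =>
    mul_pos (rvDist_apply_pos hw.1 (fun ω t => Y t ω) hω)
      (prod_pos fun t _ => condDist_apply_pos hw.1 (X t) (Y t) hω)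
  have gibbs := Hent_le_neg_sum_mul_logb hw (fun ω => ((fun t => X t ω), (fun t => Y t ω)))
    hQ_nonneg (sum_rvDist_mul_prod_condDist_le_one hw X Y) hQ_pos
  have hlogQ : ∀ ω, 0 < w ω → logb 2 (Q ((fun t => X t ω), (fun t => Y t ω)))
      = logb 2 (rvDist w (fun ω t => Y t ω) (fun t => Y t ω))
        + ∑ t, (logb 2 (rvDist w (fun ω => (X t ω, Y t ω)) (X t ω, Y t ω))
          - logb 2 (rvDist w (Y t) (Y t ω))) := fun ω hω => by
    have hY := fun t => rvDist_apply_pos hw.1 (Y t) hω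
    have hXY := fun t => rvDist_apply_pos hw.1 (fun ω => (X t ω, Y t ω)) hω
    rw [logb_mul (rvDist_apply_pos hw.1 (fun ω t => Y t ω) hω).ne'
        (prod_pos fun t _ => condDist_apply_pos hw.1 (X t) (Y t) hω).ne',
      logb_prod _ _ fun t _ => (condDist_apply_pos hw.1 (X t) (Y t) hω).ne']
    simp only [condDist, logb_div (hXY _).ne' (hY _).ne']
  rw [sum_mul_congr_of_pos hw.1 hlogQ] at gibbs
  simp only [Hcond, Hent_eq_neg_sum, mul_add, mul_sub, mul_sum, sum_add_distrib,
    sum_sub_distrib, sum_neg_distrib] at gibbs ⊢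
  rw [sum_comm (s := (univ : Finset Ω)), sum_comm (s := (univ : Finset Ω))] at gibbs
  linarith

lemma sum_MI_le_MI_pi (hw : IsPMF w) (X : ι → Ω → A) (Y : ι → Ω → B)
    (hX : ∀ v, rvDist w (fun ω t => X t ω) v = ∏ t, rvDist w (X t) (v t)) :
    ∑ t, MI w (X t) (Y t) ≤ MI w (fun ω t => X t ω) (fun ω t => Y t ω) := by
  simp only [MI_eq_Hent_sub_Hcond, sum_sub_distrib]
  rw [Hent_pi_eq_sum hw.1 X hX]
  linarith [Hcond_pi_le_sum hw X Y]

end Family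

/-- if `X_1,…,X_n` are i.i.d., then
`(1/n) I(X^n;Y^n) ≥ (1/n) ∑_t I(X_t;Y_t)`. -/
theorem single_letterization {Ω A B : Type*} [Fintype Ω] [Fintype A] [Fintype B]
    [DecidableEq A] [DecidableEq B] {n : ℕ}
    (w : Ω → ℝ) (hw : IsPMF w) (X : Fin n → Ω → A) (Y : Fin n → Ω → B)
    (hX : IIDFamily w X) :
    (1 / (n : ℝ)) * ∑ t, MI w (X t) (Y t) ≤
      (1 / (n : ℝ)) * MI w (fun ω (t : Fin n) => X t ω) (fun ω (t : Fin n) => Y t ω) :=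
  mul_le_mul_of_nonneg_left (sum_MI_le_MI_pi hw X Y hX.1) (by positivity)
end
end

section
/- Let {E_t} and {Z_t} be i.i.d. integrable nonnegative sequences with E[Z] < E[E], and let h: ℕ → ℕ satisfy h(n) → ∞ and h(n)/n → 0. Define the store-and-hide request sequence W_t = 0 for t ≤ h(n) and W_t = Z_t for t > h(n). Then for every ε > 0 and all sufficiently large n, P(∃ k ≤ n: Σ_{t=1}^k W_t > Σ_{t=1}^k E_t) ≤ ε. -/
/-!
The slack `∑_{t<k} (E_t - Z_t)` is a random walk with positive drift `E[E] - E[Z]`, so by the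
strong law of large numbers it is eventually positive almost surely; hence the probability that
it is negative at some time after `m` tends to `0` as `m → ∞`. Before `h(n)` nothing is requested
and the harvested energy is nonnegative, while afterwards the request is at most `Z_t`; so an
overdraft within `n` slots forces the slack to be negative at some time after `h(n) → ∞`.
-/

open MeasureTheory ProbabilityTheory Filter Finset

section

variable {Ω : Type*} [MeasurableSpace Ω] {μ : Measure Ω}

lemma ProbabilityTheory.IdentDistrib.sub_of_indepFun {Ω' γ : Type*} [MeasurableSpace Ω']
    [MeasurableSpace γ] [Sub γ] [MeasurableSub₂ γ] [IsFiniteMeasure μ] {ν : Measure Ω'}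
    {X Y : Ω → γ} {X' Y' : Ω' → γ} (hX : IdentDistrib X X' μ ν) (hY : IdentDistrib Y Y' μ ν)
    (hXY : X ⟂ᵢ[μ] Y) (hXY' : X' ⟂ᵢ[ν] Y') :
    IdentDistrib (X - Y) (X' - Y') μ ν :=
  (hX.prodMk hY hXY hXY').comp measurable_sub

lemma ProbabilityTheory.iIndepFun.pairwise_indepFun_sub_elim {ι γ : Type*} [MeasurableSpace γ]
    [Sub γ] [MeasurableSub₂ γ] {X Y : ι → Ω → γ} (hXY : iIndepFun (Sum.elim X Y) μ)
    (hX : ∀ i, AEMeasurable (X i) μ) (hY : ∀ i, AEMeasurable (Y i) μ) :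
    Pairwise (Function.onFun (· ⟂ᵢ[μ] ·) (X - Y)) := by
  intro i j hij
  exact (hXY.indepFun_prodMk_prodMk₀ (Sum.forall.2 ⟨hX, hY⟩) (.inl i) (.inr i) (.inl j) (.inr j)
    (by simp [hij]) (by simp) (by simp) (by simp [hij])).comp measurable_sub measurable_sub

lemma eventually_pos_of_tendsto_div_natCast {s : ℕ → ℝ} {c : ℝ}
    (hs : Tendsto (fun n => s n / n) atTop (nhds c)) (hc : 0 < c) : ∀ᶠ n in atTop, 0 < s n := by
  filter_upwards [hs.eventually_const_lt hc] with n hn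
  rcases div_pos_iff.1 hn with h | h
  · exact h.1
  · exact absurd h.2 (Nat.cast_nonneg n).not_gt

lemma tendsto_measure_biUnion_gt_of_ae_eventually_notMem [IsFiniteMeasure μ] {A : ℕ → Set Ω}
    (hA : ∀ k, NullMeasurableSet (A k) μ) (hae : ∀ᵐ ω ∂μ, ∀ᶠ k in atTop, ω ∉ A k) :
    Tendsto (fun m => μ (⋃ k > m, A k)) atTop (nhds 0) := by
  have hanti : Antitone fun m => ⋃ k > m, A k := fun m m' hmm' =>
    Set.biUnion_subset_biUnion_left fun k hk => lt_of_le_of_lt hmm' hk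
  have hnull : μ (⋂ m, ⋃ k > m, A k) = 0 := by
    refine measure_eq_zero_iff_ae_notMem.2 ?_
    filter_upwards [hae] with ω hω hmem
    obtain ⟨N, hN⟩ := hω.exists_forall_of_atTop
    obtain ⟨k, hk, hkA⟩ := Set.mem_iUnion₂.1 (Set.mem_iInter.1 hmem N)
    exact hN k hk.le hkA
  rw [← hnull]
  exact tendsto_measure_iInter_atTop
    (fun m => NullMeasurableSet.biUnion (Set.to_countable _) fun k _ => hA k) hanti
    ⟨0, measure_ne_top μ _⟩

lemma ae_eventually_sum_sub_pos [IsFiniteMeasure μ] {E Z : ℕ → Ω → ℝ}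
    (hindep : iIndepFun (Sum.elim E Z) μ)
    (hEid : ∀ i, IdentDistrib (E i) (E 0) μ μ) (hZid : ∀ i, IdentDistrib (Z i) (Z 0) μ μ)
    (hEint : Integrable (E 0) μ) (hZint : Integrable (Z 0) μ)
    (hmean : ∫ ω, Z 0 ω ∂μ < ∫ ω, E 0 ω ∂μ) :
    ∀ᵐ ω ∂μ, ∀ᶠ k in atTop, 0 < ∑ t ∈ range k, (E t ω - Z t ω) := by
  have hEZ : ∀ i, E i ⟂ᵢ[μ] Z i := fun i => hindep.indepFun (i := .inl i) (j := .inr i) (by simp)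
  have hslln := strong_law_ae_real (E - Z) (hEint.sub hZint)
    (hindep.pairwise_indepFun_sub_elim (fun i => (hEid i).aemeasurable_fst)
      (fun i => (hZid i).aemeasurable_fst))
    (fun i => (hEid i).sub_of_indepFun (hZid i) (hEZ i) (hEZ 0))
  have hdrift : 0 < μ[E 0 - Z 0] := by
    rw [integral_sub' hEint hZint]
    exact sub_pos.2 hmean
  filter_upwards [hslln] with ω hω
  exact eventually_pos_of_tendsto_div_natCast hω hdrift

lemma lt_and_sum_sub_neg_of_sum_lt_sum_ite {e z : ℕ → ℝ} (he : ∀ t, 0 ≤ e t) (hz : ∀ t, 0 ≤ z t)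
    {m k : ℕ} (hk : ∑ t ∈ range k, e t < ∑ t ∈ range k, if t < m then 0 else z t) :
    m < k ∧ ∑ t ∈ range k, (e t - z t) < 0 := by
  constructor
  · by_contra! hkm
    have hzero : ∑ t ∈ range k, (if t < m then 0 else z t) = 0 :=
      sum_eq_zero fun t ht => if_pos ((mem_range.1 ht).trans_le hkm)
    exact (sum_nonneg fun t _ => he t).not_gt (hzero ▸ hk)
  · have hle : ∑ t ∈ range k, (if t < m then 0 else z t) ≤ ∑ t ∈ range k, z t :=
      sum_le_sum fun t _ => by split_ifs <;> simp [hz t]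
    rw [sum_sub_distrib]
    linarith

end

theorem store_and_hide_feasible_general {Ω : Type*} [MeasurableSpace Ω] (μ : Measure Ω)
    [IsProbabilityMeasure μ] (E Z : ℕ → Ω → ℝ)
    (hindep : iIndepFun (Sum.elim E Z) μ)
    (hEid : ∀ i, IdentDistrib (E i) (E 0) μ μ)
    (hZid : ∀ i, IdentDistrib (Z i) (Z 0) μ μ)
    (hEint : Integrable (E 0) μ) (hZint : Integrable (Z 0) μ)
    (hEnn : ∀ i ω, 0 ≤ E i ω) (hZnn : ∀ i ω, 0 ≤ Z i ω)
    (hmean : ∫ ω, Z 0 ω ∂μ < ∫ ω, E 0 ω ∂μ)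
    (h : ℕ → ℕ) (hhTop : Tendsto h atTop atTop) :
    ∀ ε : ℝ, 0 < ε → ∀ᶠ n in atTop,
      μ {ω | ∃ k ≤ n, ∑ t ∈ Finset.range k, E t ω <
          ∑ t ∈ Finset.range k, (if t < h n then 0 else Z t ω)} ≤ ENNReal.ofReal ε := by
  intro ε hε
  have hmeas : ∀ k, NullMeasurableSet {ω | ∑ t ∈ range k, (E t ω - Z t ω) < 0} μ := fun k =>
    nullMeasurableSet_lt (Finset.aemeasurable_fun_sum _ fun t _ =>
      (hEid t).aemeasurable_fst.sub (hZid t).aemeasurable_fst) aemeasurable_const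
  have htail := tendsto_measure_biUnion_gt_of_ae_eventually_notMem hmeas <| by
    filter_upwards [ae_eventually_sum_sub_pos hindep hEid hZid hEint hZint hmean] with ω hω
    filter_upwards [hω] with k hk using hk.not_gt
  filter_upwards [(htail.comp hhTop).eventually_lt_const (ENNReal.ofReal_pos.2 hε)] with n hn
  refine (measure_mono ?_).trans hn.le
  rintro ω ⟨k, -, hk⟩
  obtain ⟨hlt, hneg⟩ := lt_and_sum_sub_neg_of_sum_lt_sum_ite (hEnn · ω) (hZnn · ω) hk
  exact Set.mem_iUnion₂.2 ⟨k, hlt, hneg⟩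

/-- store-and-hide feasibility. With `{E_t}, {Z_t}` independent i.i.d. integrable
nonnegative sequences, `E[Z] < E[E]`, and a storage-phase length `h(n) → ∞` with `h(n)/n → 0`,
the store-and-hide requests `W_t = 0` for `t ≤ h(n)`, `W_t = Z_t` afterwards, satisfy: for every
`ε > 0` and all sufficiently large `n`, the probability that the cumulative request ever exceeds
the cumulative harvested energy within `n` slots is at most `ε`. -/
theorem store_and_hide_feasible {Ω : Type*} [MeasurableSpace Ω] (μ : Measure Ω)
    [IsProbabilityMeasure μ] (E Z : ℕ → Ω → ℝ)
    (hmE : ∀ i, Measurable (E i)) (hmZ : ∀ i, Measurable (Z i))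
    (hindep : iIndepFun (Sum.elim E Z) μ)
    (hEid : ∀ i, IdentDistrib (E i) (E 0) μ μ)
    (hZid : ∀ i, IdentDistrib (Z i) (Z 0) μ μ)
    (hEint : Integrable (E 0) μ) (hZint : Integrable (Z 0) μ)
    (hEnn : ∀ i ω, 0 ≤ E i ω) (hZnn : ∀ i ω, 0 ≤ Z i ω)
    (hmean : ∫ ω, Z 0 ω ∂μ < ∫ ω, E 0 ω ∂μ)
    (h : ℕ → ℕ) (hhTop : Tendsto h atTop atTop)
    (hho : Tendsto (fun n => (h n : ℝ) / (n : ℝ)) atTop (nhds 0)) :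
    ∀ ε : ℝ, 0 < ε → ∀ᶠ n in atTop,
      μ {ω | ∃ k ≤ n, ∑ t ∈ Finset.range k, E t ω <
          ∑ t ∈ Finset.range k, (if t < h n then 0 else Z t ω)} ≤ ENNReal.ofReal ε :=
  store_and_hide_feasible_general μ E Z hindep hEid hZid hEint hZint hEnn hZnn hmean h hhTop
end

section
/- For the binary input load X ~ Bernoulli(q_x) on {0,1} and average power constraint p_e ∈ [0, q_x], the privacy-power function equals I(p_e, ∞) = p_e·log₂(p_e) − q_x·log₂(q_x) − (1 − q_x + p_e)·log₂(1 − q_x + p_e), and I(p_e, ∞) = 0 for p_e > q_x. In particular, the infimum of I(X;Y) over channels p_{Y|X} with Y ≤ X and E[X−Y] ≤ p_e is given by this expression. -/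
open Finset Real

noncomputable section

/-- Expected energy drawn from the alternative source, `E[X - Y]`, under channel `K`. -/
def avgDraw {ι : Type*} [Fintype ι] (v p : ι → ℝ) (K : ι → ι → ℝ) : ℝ :=
  ∑ x, ∑ y, p x * K x y * (v x - v y)

/-- `K` is a channel: nonnegative, rows summing to one, and feasible: `Y ≤ X` pointwise. -/
def IsChannel {ι : Type*} [Fintype ι] (v : ι → ℝ) (K : ι → ι → ℝ) : Prop :=
  (∀ x y, 0 ≤ K x y) ∧ (∀ x, ∑ y, K x y = 1) ∧ (∀ x y, 0 < K x y → 0 ≤ v x - v y)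

/-- Mutual information `I(X;Y)` induced by the input pmf `p` and the channel `K`. -/
def chanMI {ι : Type*} [Fintype ι] [DecidableEq ι] (p : ι → ℝ) (K : ι → ι → ℝ) : ℝ :=
  MI (fun xy : ι × ι => p xy.1 * K xy.1 xy.2) Prod.fst Prod.snd

/-- Privacy-power function with an average power constraint only: `I(P̄, ∞)`. -/
def ppfAvg {ι : Type*} [Fintype ι] [DecidableEq ι] (v p : ι → ℝ) (Pbar : ℝ) : ℝ :=
  sInf {r | ∃ K : ι → ι → ℝ, IsChannel v K ∧
    0 ≤ avgDraw v p K ∧ avgDraw v p K ≤ Pbar ∧ r = chanMI p K}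

/-- Privacy-power function with average and peak power constraints: `I(P̄, P̂)`. -/
def ppfBoth {ι : Type*} [Fintype ι] [DecidableEq ι] (v p : ι → ℝ) (Pbar Phat : ℝ) : ℝ :=
  sInf {r | ∃ K : ι → ι → ℝ, IsChannel v K ∧
    (∀ x y, 0 < K x y → v x - v y ≤ Phat) ∧
    0 ≤ avgDraw v p K ∧ avgDraw v p K ≤ Pbar ∧ r = chanMI p K}

/-- Real value of a binary load level. -/
def b2r (b : Bool) : ℝ := if b then 1 else 0

/-- Bernoulli pmf on `Bool` with success probability `q`. -/
def bern (q : ℝ) (b : Bool) : ℝ := if b then q else 1 - q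

/-- Binary entropy function (in bits). -/
def binEnt (p : ℝ) : ℝ := -(p * Real.logb 2 p) - (1 - p) * Real.logb 2 (1 - p)

/-!
Since `Y ≤ X`, every feasible channel is a Z-channel: `1` is lowered to `0` with some probability
`ε`, and `0` stays. It draws `t = q ε` on average and leaks `I(X;Y) = binaryPPF q t`. Its
derivative in `t` is `log₂ (t / (1 - q + t)) ≤ 0`, so the least leakage is at the largest
feasible draw `min q p_e`, and drawing everything (`t = q`) leaks nothing.
-/

def zChannel (ε : ℝ) (x y : Bool) : ℝ :=
  if x then (if y then 1 - ε else ε) else (if y then 0 else 1)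

def binaryPPF (q t : ℝ) : ℝ :=
  t * logb 2 t - q * logb 2 q - (1 - q + t) * logb 2 (1 - q + t)

theorem antitoneOn_mul_log_sub_mul_log_add {c : ℝ} (hc : 0 ≤ c) :
    AntitoneOn (fun t => t * log t - (c + t) * log (c + t)) (Set.Ici 0) := by
  have hderiv : ∀ t > 0, HasDerivAt (fun t => t * log t - (c + t) * log (c + t))
      (log t - log (c + t)) t := by
    intro t ht
    have hshift : HasDerivAt (fun t : ℝ => c + t) 1 t := (hasDerivAt_id t).const_add c
    have hct : c + t ≠ 0 := by positivity
    exact ((hasDerivAt_mul_log ht.ne').sub ((hasDerivAt_mul_log hct).comp t hshift)).congr_deriv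
      (by ring)
  apply antitoneOn_of_deriv_nonpos (convex_Ici 0)
  · exact (continuous_mul_log.sub
      (continuous_mul_log.comp (continuous_const.add continuous_id))).continuousOn
  · rw [interior_Ici]
    exact fun t ht => (hderiv t ht).differentiableAt.differentiableWithinAt
  · rw [interior_Ici]
    intro t ht
    rw [(hderiv t ht).deriv, sub_nonpos]
    exact log_le_log ht (by linarith)

theorem binaryPPF_eq_div_log_two (q t : ℝ) :
    binaryPPF q t = (t * log t - (1 - q + t) * log (1 - q + t) - q * log q) / log 2 := by
  simp only [binaryPPF, logb]
  ring

theorem antitoneOn_binaryPPF {q : ℝ} (hq : q ≤ 1) : AntitoneOn (binaryPPF q) (Set.Ici 0) := by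
  intro a ha b hb hab
  simp only [binaryPPF_eq_div_log_two]
  have := antitoneOn_mul_log_sub_mul_log_add (sub_nonneg.2 hq) ha hb hab
  simp only at this
  gcongr ?_ / _
  linarith

theorem binaryPPF_self (q : ℝ) : binaryPPF q q = 0 := by
  simp [binaryPPF]

theorem isChannel_b2r_iff {K : Bool → Bool → ℝ} :
    IsChannel b2r K ↔ ∃ ε ∈ Set.Icc (0 : ℝ) 1, K = zChannel ε := by
  constructor
  · rintro ⟨hnonneg, hrow, hfeas⟩
    have h01 : K false true = 0 := by
      by_contra h
      have := hfeas false true ((hnonneg false true).lt_of_ne' h)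
      norm_num [b2r] at this
    have hrow0 := hrow false
    have hrow1 := hrow true
    simp only [Fintype.sum_bool] at hrow0 hrow1
    refine ⟨K true false, ⟨hnonneg true false, by linarith [hnonneg true true]⟩, ?_⟩
    funext x y
    cases x <;> cases y <;> simp [zChannel] <;> linarith
  · rintro ⟨ε, ⟨hε0, hε1⟩, rfl⟩
    refine ⟨?_, ?_, ?_⟩
    · intro x y
      cases x <;> cases y <;> simp [zChannel] <;> linarith
    · intro x
      cases x <;> simp [zChannel]
    · intro x y h
      cases x <;> cases y <;> simp_all [zChannel, b2r]

theorem avgDraw_zChannel (q ε : ℝ) : avgDraw b2r (bern q) (zChannel ε) = q * ε := by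
  simp [avgDraw, b2r, bern, zChannel]

theorem chanMI_zChannel (q ε : ℝ) : chanMI (bern q) (zChannel ε) = binaryPPF q (q * ε) := by
  simp only [chanMI, MI, Hent, rvDist, bern, zChannel, binaryPPF, Fintype.sum_prod_type,
    Fintype.sum_bool]
  simp only [↓reduceIte, Bool.false_eq_true, Bool.true_eq_false, Prod.mk.injEq, and_false,
    and_true, and_self, add_zero, zero_add, mul_zero, mul_one, neg_add_rev, logb_zero]
  ring_nf

theorem ppfAvg_b2r_bern {q pe : ℝ} (hq0 : 0 < q) (hq1 : q ≤ 1) (hpe : 0 ≤ pe) :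
    ppfAvg b2r (bern q) pe = binaryPPF q (min q pe) := by
  have hfeasible : {r | ∃ K : Bool → Bool → ℝ, IsChannel b2r K ∧
      0 ≤ avgDraw b2r (bern q) K ∧ avgDraw b2r (bern q) K ≤ pe ∧ r = chanMI (bern q) K}
      = binaryPPF q '' Set.Icc 0 (min q pe) := by
    ext r
    simp only [isChannel_b2r_iff, Set.mem_ofPred_eq, Set.mem_image, Set.mem_Icc, le_min_iff]
    constructor
    · rintro ⟨_, ⟨ε, ⟨hε0, hε1⟩, rfl⟩, h0, hle, rfl⟩
      rw [avgDraw_zChannel] at h0 hle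
      exact ⟨q * ε, ⟨h0, mul_le_of_le_one_right hq0.le hε1, hle⟩, (chanMI_zChannel q ε).symm⟩
    · rintro ⟨t, ⟨ht0, htq, htpe⟩, rfl⟩
      have hqt : q * (t / q) = t := mul_div_cancel₀ t hq0.ne'
      refine ⟨zChannel (t / q), ⟨t / q, ⟨by positivity, (div_le_one hq0).2 htq⟩, rfl⟩, ?_⟩
      rw [avgDraw_zChannel, chanMI_zChannel, hqt]
      exact ⟨ht0, htpe, rfl⟩
  rw [ppfAvg, hfeasible]
  exact ((antitoneOn_binaryPPF hq1).mono Set.Icc_subset_Ici_self).sInf_image_Icc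
    (le_min hq0.le hpe)

/-- for a binary input load `X ~ Bernoulli(q)` and average constraint `p_e`,
the privacy-power function `I(p_e, ∞)` equals
`p_e log₂ p_e − q log₂ q − (1 − q + p_e) log₂ (1 − q + p_e)` for `p_e ≤ q`, and `0` otherwise. -/
theorem binary_ppf_avg (q pe : ℝ) (hq : q ∈ Set.Ioo (0 : ℝ) 1) (hpe : 0 ≤ pe) :
    (pe ≤ q →
      ppfAvg b2r (bern q) pe =
        pe * Real.logb 2 pe - q * Real.logb 2 q
          - (1 - q + pe) * Real.logb 2 (1 - q + pe)) ∧
    (q < pe → ppfAvg b2r (bern q) pe = 0) := by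
  rw [ppfAvg_b2r_bern hq.1 hq.2.le hpe]
  exact ⟨fun h => by rw [min_eq_right h, binaryPPF],
    fun h => by rw [min_eq_left h.le, binaryPPF_self]⟩
end
end

section
/- For binary input X ~ Bernoulli(q_x) and binary state E ~ Bernoulli(p_e) independent of X, with zero battery and state known at the utility provider, the minimum conditional information leakage is inf_{p_{Y|X,E}: 0 ≤ X−Y ≤ E} I(X;Y|E) = (1−p_e)·h(q_x), where h is the binary entropy function. -/
open Finset Real

noncomputable section

/-! The constraint `0 ≤ X - Y ≤ E` forces `Y = X` when `E = 0` and `Y = 0` when `X = 0`, so an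
admissible channel is determined by `α = P(Y = 1 | X = 1, E = 1)`, and then
`I(X;Y|E) = (1 - p_e) h(q) + p_e (h(qα) - q h(α))`. The bracket is nonnegative because `h` is
concave with `h 0 = 0`, and it vanishes at `α = 0`. -/

lemma mul_logb_mul (b x y : ℝ) :
    x * y * logb b (x * y) = x * (y * logb b y) + y * (x * logb b x) := by
  rcases eq_or_ne x 0 with rfl | hx
  · simp
  rcases eq_or_ne y 0 with rfl | hy
  · simp
  rw [logb_mul hx hy]
  ring

lemma binEnt_eq_binEntropy_div_log_two (p : ℝ) : binEnt p = binEntropy p / log 2 := by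
  rw [binEntropy, log_inv, log_inv]
  unfold binEnt logb
  ring

lemma mul_binEnt_le_binEnt_mul {q α : ℝ} (hq : q ∈ Set.Icc (0 : ℝ) 1)
    (hα : α ∈ Set.Icc (0 : ℝ) 1) : q * binEnt α ≤ binEnt (q * α) := by
  have hconc := strictConcave_binEntropy.concaveOn.2 hα (Set.left_mem_Icc.2 zero_le_one)
    hq.1 (sub_nonneg.2 hq.2) (add_sub_cancel q 1)
  simp only [smul_eq_mul, binEntropy_zero, mul_zero, add_zero] at hconc
  rw [binEnt_eq_binEntropy_div_log_two, binEnt_eq_binEntropy_div_log_two, ← mul_div_assoc]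
  exact div_le_div_of_nonneg_right hconc (log_nonneg one_le_two)

/-- `α = P(Y = 1 | X = 1, E = 1)`; every other entry is forced by `0 ≤ X - Y ≤ E`. -/
def knownStateChannel (α : ℝ) (x e y : Bool) : ℝ :=
  if e then (if x then bern α y else bern 0 y) else (if y = x then 1 else 0)

lemma knownStateChannel_nonneg {α : ℝ} (hα : α ∈ Set.Icc (0 : ℝ) 1) (x e y : Bool) :
    0 ≤ knownStateChannel α x e y := by
  cases x <;> cases e <;> cases y <;> simp [knownStateChannel, bern, hα.1, hα.2]

lemma sum_knownStateChannel (α : ℝ) (x e : Bool) : ∑ y, knownStateChannel α x e y = 1 := by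
  cases x <;> cases e <;> simp [knownStateChannel, bern]

lemma knownStateChannel_support {α : ℝ} (x e y : Bool) (h : 0 < knownStateChannel α x e y) :
    0 ≤ b2r x - b2r y ∧ b2r x - b2r y ≤ b2r e := by
  cases x <;> cases e <;> cases y <;> simp_all [knownStateChannel, bern, b2r]

lemma eq_knownStateChannel {K : Bool → Bool → Bool → ℝ} (hK0 : ∀ x e y, 0 ≤ K x e y)
    (hK1 : ∀ x e, ∑ y, K x e y = 1)
    (hKc : ∀ x e y, 0 < K x e y → 0 ≤ b2r x - b2r y ∧ b2r x - b2r y ≤ b2r e) :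
    K = knownStateChannel (K true true true) := by
  have hforbidden : ∀ x e y, ¬ (0 ≤ b2r x - b2r y ∧ b2r x - b2r y ≤ b2r e) → K x e y = 0 :=
    fun x e y h => ((hK0 x e y).lt_or_eq.resolve_left (mt (hKc x e y) h)).symm
  have hsum : ∀ x e, K x e false = 1 - K x e true := fun x e => by
    linarith [Fintype.sum_bool (K x e) ▸ hK1 x e]
  have h001 : K false false true = 0 := hforbidden _ _ _ (by norm_num [b2r])
  have h011 : K false true true = 0 := hforbidden _ _ _ (by norm_num [b2r])
  have h101 : K true false true = 1 := by
    linarith [hsum true false, hforbidden true false false (by norm_num [b2r])]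
  funext x e y
  cases x <;> cases e <;> cases y <;> simp [knownStateChannel, bern, hsum, h001, h011, h101]

lemma cmi_knownStateChannel (q pe α : ℝ) :
    CMI (fun ω : Bool × Bool × Bool =>
          bern q ω.1 * bern pe ω.2.1 * knownStateChannel α ω.1 ω.2.1 ω.2.2)
        (fun ω => ω.1) (fun ω => ω.2.2) (fun ω => ω.2.1)
      = (1 - pe) * binEnt q + pe * (binEnt (q * α) - q * binEnt α) := by
  simp only [CMI, Hent, rvDist, Fintype.sum_prod_type, Fintype.sum_bool, bern,
    knownStateChannel]
  simp only [↓reduceIte, Bool.false_eq_true, Bool.true_eq_false, Prod.mk.injEq, and_false,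
    and_true, and_self, add_zero, zero_add, mul_one, mul_zero, sub_zero, neg_add_rev, logb_zero]
  rw [show q * pe * α + q * pe * (1 - α) = q * pe by ring,
    show q * pe * (1 - α) + (1 - q) * pe = pe * (1 - q * α) by ring,
    show q * (1 - pe) + (1 - q) * (1 - pe) = 1 - pe by ring,
    show q * pe + (1 - q) * pe = pe by ring]
  unfold binEnt
  simp only [mul_logb_mul]
  ring

/-- for binary `X ~ Bernoulli(q)` independent of the state `E ~ Bernoulli(p_e)`,
with zero battery and state known at the utility provider, the minimum conditional leakage is
`inf_{p_{Y|X,E} : 0 ≤ X−Y ≤ E} I(X;Y|E) = (1 − p_e)·h(q)`. -/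
theorem binary_known_state_leakage (q pe : ℝ)
    (hq : q ∈ Set.Ioo (0 : ℝ) 1) (hpe : pe ∈ Set.Icc (0 : ℝ) 1) :
    sInf {r | ∃ K : Bool → Bool → Bool → ℝ,
        (∀ x e y, 0 ≤ K x e y) ∧ (∀ x e, ∑ y, K x e y = 1) ∧
        (∀ x e y, 0 < K x e y → 0 ≤ b2r x - b2r y ∧ b2r x - b2r y ≤ b2r e) ∧
        r = CMI (fun ω : Bool × Bool × Bool => bern q ω.1 * bern pe ω.2.1 * K ω.1 ω.2.1 ω.2.2)
              (fun ω => ω.1) (fun ω => ω.2.2) (fun ω => ω.2.1)} =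
      (1 - pe) * binEnt q := by
  refine IsLeast.csInf_eq ⟨?_, ?_⟩
  · have h0 : (0 : ℝ) ∈ Set.Icc (0 : ℝ) 1 := Set.left_mem_Icc.2 zero_le_one
    refine ⟨knownStateChannel 0, knownStateChannel_nonneg h0, sum_knownStateChannel 0,
      knownStateChannel_support, ?_⟩
    simp [cmi_knownStateChannel, binEnt]
  · rintro r ⟨K, hK0, hK1, hKc, rfl⟩
    have hα : K true true true ∈ Set.Icc (0 : ℝ) 1 :=
      ⟨hK0 _ _ _, by linarith [Fintype.sum_bool (K true true) ▸ hK1 true true, hK0 true true false]⟩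
    rw [eq_knownStateChannel hK0 hK1 hKc, cmi_knownStateChannel]
    exact le_add_of_nonneg_right (mul_nonneg hpe.1
      (sub_nonneg.2 (mul_binEnt_le_binEnt_mul (Set.Ioo_subset_Icc_self hq) hα)))
end
end

section
/- For binary X ~ Bernoulli(q_x) with q_x ∈ (0,1) and any p_e ∈ (0,1): the three leakage rates satisfy I(p_e,∞) ≤ h(1 − q_x + p_e·q_x) − q_x·h(p_e) ≤ (1−p_e)·h(q_x), i.e., infinite-battery leakage ≤ zero-battery leakage with hidden state ≤ zero-battery leakage with state known at the utility provider. -/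
open Finset Real

noncomputable section

private lemma mulLogSub (x y : ℝ) (hx : 0 < x) (hy : 0 < y) :
    y * (Real.log x - Real.log y) ≤ x - y := by
  have h := Real.log_le_sub_one_of_pos (div_pos hx hy)
  rw [Real.log_div hx.ne' hy.ne'] at h
  have h2 := mul_le_mul_of_nonneg_left h hy.le
  have h3 : y * (x / y - 1) = x - y := by field_simp
  linarith [h2, h3.le, h3.ge]

private lemma lnB (u v : ℝ) (hu0 : 0 < u) (hu1 : u < 1) (hv0 : 0 ≤ v) (hv1 : v ≤ 1) :
    v * Real.log (1 - u) ≤ Real.log (1 - u * v) := by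
  have hM : 0 < 1 - u * v := by nlinarith
  have g1 := mulLogSub (1 - u) (1 - u * v) (by linarith) hM
  have g2 := mulLogSub 1 (1 - u * v) one_pos hM
  rw [Real.log_one] at g2
  have c1 := mul_le_mul_of_nonneg_left g1 hv0
  have c2 := mul_le_mul_of_nonneg_left g2 (by linarith : (0:ℝ) ≤ 1 - v)
  have key : (1 - u * v) * (v * Real.log (1 - u) - Real.log (1 - u * v)) ≤ 0 := by
    nlinarith [c1, c2]
  by_contra hcon
  push_neg at hcon
  nlinarith [key, hM, hcon]

private lemma lnA (q pe : ℝ) (hq0 : 0 < q) (hq1 : q < 1) (hp0 : 0 < pe) (hp1 : pe < 1) :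
    pe * Real.log pe - q * Real.log q - (1 - q + pe) * Real.log (1 - q + pe) ≤
      -((1 - q + pe * q) * Real.log (1 - q + pe * q)) - (q * (1 - pe)) * (Real.log q + Real.log (1 - pe))
        - q * (-(pe * Real.log pe) - (1 - pe) * Real.log (1 - pe)) := by
  have hα0 : 0 < 1 - q + pe * q := by nlinarith
  have hM0 : 0 < 1 - q + pe := by linarith
  have F1 : Real.log (1 - q + pe * q) ≤ Real.log (1 - q + pe) := by
    apply Real.log_le_log hα0; nlinarith
  have hA0 : 0 < (1 - q + pe * q) / q := div_pos hα0 hq0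
  have g1 := mulLogSub ((1 - q + pe * q) / q) (1 - q + pe) hA0 hM0
  have g2 := mulLogSub pe (1 - q + pe) hp0 hM0
  have c1 := mul_le_mul_of_nonneg_left g1 hq0.le
  have c2 := mul_le_mul_of_nonneg_left g2 (by linarith : (0:ℝ) ≤ 1 - q)
  have hqA : q * ((1 - q + pe * q) / q) = 1 - q + pe * q := by field_simp
  have key : (1 - q + pe) *
      (q * Real.log ((1 - q + pe * q) / q) + (1 - q) * Real.log pe - Real.log (1 - q + pe)) ≤ 0 := by
    nlinarith [c1, c2, hqA]
  have F2 : q * Real.log ((1 - q + pe * q) / q) + (1 - q) * Real.log pe ≤ Real.log (1 - q + pe) := by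
    by_contra hcon; push_neg at hcon; nlinarith [key, hM0, hcon]
  rw [Real.log_div hα0.ne' hq0.ne'] at F2
  have hc1 := mul_le_mul_of_nonneg_left F1 (by linarith : (0:ℝ) ≤ 1 - q)
  have hc2 := mul_le_mul_of_nonneg_left F2 hp0.le
  nlinarith [hc1, hc2]

private lemma lnA' (q pe : ℝ) (hq0 : 0 < q) (hq1 : q < 1) (hp0 : 0 < pe) (hp1 : pe < 1) :
    q * (-(pe * Real.log pe) - (1 - pe) * Real.log (1 - pe)) ≤
      -((1 - q + pe * q) * Real.log (1 - q + pe * q))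
        - (q * (1 - pe)) * (Real.log q + Real.log (1 - pe)) := by
  have hα0 : 0 < 1 - q + pe * q := by nlinarith
  have h1 := mulLogSub (1 - q + pe * q) pe hα0 hp0
  have h2 := Real.log_le_sub_one_of_pos hα0
  have hlq : Real.log q ≤ 0 := Real.log_nonpos hq0.le hq1.le
  have m1 := mul_le_mul_of_nonneg_left h1 hq0.le
  have m2 := mul_le_mul_of_nonneg_left h2 (by linarith : (0:ℝ) ≤ 1 - q)
  have m3 : 0 ≤ q * (1 - pe) * (-Real.log q) :=
    mul_nonneg (mul_nonneg hq0.le (by linarith)) (by linarith)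
  nlinarith [m1, m2, m3]

private lemma lnC (q pe : ℝ) (hq0 : 0 < q) (hq1 : q < 1) (hp0 : 0 < pe) (hp1 : pe < 1) :
    -((1 - q + pe * q) * Real.log (1 - q + pe * q))
        - (q * (1 - pe)) * (Real.log q + Real.log (1 - pe))
        - q * (-(pe * Real.log pe) - (1 - pe) * Real.log (1 - pe)) ≤
      (1 - pe) * (-(q * Real.log q) - (1 - q) * Real.log (1 - q)) := by
  have hα0 : 0 < 1 - q + pe * q := by nlinarith
  have T1 : (1 - pe) * Real.log (1 - q) ≤ Real.log (1 - q + pe * q) := by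
    have h := lnB q (1 - pe) hq0 hq1 (by linarith) (by linarith)
    have e : 1 - q * (1 - pe) = 1 - q + pe * q := by ring
    rwa [e] at h
  have T2 : Real.log pe ≤ Real.log (1 - q + pe * q) := by
    apply Real.log_le_log hp0; nlinarith
  have m1 := mul_le_mul_of_nonneg_left T1 (by linarith : (0:ℝ) ≤ 1 - q)
  have m2 := mul_le_mul_of_nonneg_left T2 (mul_nonneg hq0.le hp0.le)
  nlinarith [m1, m2]

/-- ordering of the three minimum leakage rates for binary load and state:
infinite battery ≤ zero battery with hidden state ≤ zero battery with state known at the UP. -/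
theorem binary_leakage_ordering (q pe : ℝ)
    (hq : q ∈ Set.Ioo (0 : ℝ) 1) (hpe : pe ∈ Set.Ioo (0 : ℝ) 1) :
    (if pe ≤ q then
        pe * Real.logb 2 pe - q * Real.logb 2 q - (1 - q + pe) * Real.logb 2 (1 - q + pe)
      else 0) ≤ binEnt (1 - q + pe * q) - q * binEnt pe ∧
    binEnt (1 - q + pe * q) - q * binEnt pe ≤ (1 - pe) * binEnt q := by
  obtain ⟨hq0, hq1⟩ := hq
  obtain ⟨hp0, hp1⟩ := hpe
  have hl2 : (0:ℝ) < Real.log 2 := Real.log_pos one_lt_two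
  have hinv : (0:ℝ) ≤ (Real.log 2)⁻¹ := inv_nonneg.mpr hl2.le
  have e1 : (1:ℝ) - (1 - q + pe * q) = q * (1 - pe) := by ring
  have hne : (1:ℝ) - pe ≠ 0 := by linarith
  constructor
  · unfold binEnt
    rw [e1, Real.logb_mul hq0.ne' hne]
    split_ifs with h
    · have key := lnA q pe hq0 hq1 hp0 hp1
      have key2 := mul_le_mul_of_nonneg_right key hinv
      simp only [Real.logb, div_eq_mul_inv]
      ring_nf at key2 ⊢
      linarith [key2]
    · have key := lnA' q pe hq0 hq1 hp0 hp1
      have key2 := mul_le_mul_of_nonneg_right key hinv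
      simp only [Real.logb, div_eq_mul_inv]
      ring_nf at key2 ⊢
      linarith [key2]
  · unfold binEnt
    rw [e1, Real.logb_mul hq0.ne' hne]
    have key := lnC q pe hq0 hq1 hp0 hp1
    have key2 := mul_le_mul_of_nonneg_right key hinv
    simp only [Real.logb, div_eq_mul_inv]
    ring_nf at key2 ⊢
    linarith [key2]
end
end
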